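/- Let G be a locally compact group, H a compact subgroup, m the normalized G-invariant measure on G/H satisfying Weil's formula, and φ a Young function. Then for every f ∈ C_c(G), ‖T_H(f)‖⁰_{L^φ(G/H,m)} ≤ ‖f‖⁰_{L^φ(G)}, where ‖·‖⁰ denotes the Luxemburg (gauge) norm. -/

import Mathlib

open MeasureTheory Filter Topology ENNReal NNReal

/-- A Young function: nonzero, convex, even, left continuous, vanishing at `0`,
tending to `∞` at `∞`. -/
def IsYoung (φ : ℝ → ℝ≥0∞) : Prop :=
  φ ≠ 0 ∧
  (∀ x y a b : ℝ, 0 ≤ a → 0 ≤ b → a + b = 1 →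
    φ (a * x + b * y) ≤ ENNReal.ofReal a * φ x + ENNReal.ofReal b * φ y) ∧
  (∀ x, φ (-x) = φ x) ∧
  (∀ x, Tendsto φ (nhdsWithin x (Set.Iio x)) (nhds (φ x))) ∧
  φ 0 = 0 ∧ Tendsto φ atTop (nhds ⊤)

/-- The Luxemburg (gauge) norm on the Orlicz space `L^φ`. -/
noncomputable def luxNorm {α E : Type*} [MeasurableSpace α] [NormedAddCommGroup E]
    (φ : ℝ → ℝ≥0∞) (m : Measure α) (f : α → E) : ℝ :=
  sInf {k : ℝ | 0 < k ∧ ∫⁻ x, φ (‖f x‖ / k) ∂m ≤ 1}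

/-- Membership in the Orlicz space `L^φ`. -/
def MemLphi {α E : Type*} [MeasurableSpace α] [NormedAddCommGroup E]
    (φ : ℝ → ℝ≥0∞) (m : Measure α) (f : α → E) : Prop :=
  AEStronglyMeasurable f m ∧ ∃ a : ℝ, 0 < a ∧ ∫⁻ x, φ (a * ‖f x‖) ∂m < ⊤

/-- The `Δ₂`-condition for a Young function. -/
def IsDelta2 (φ : ℝ → ℝ≥0∞) : Prop :=
  ∃ C : ℝ≥0, 0 < C ∧ ∀ x : ℝ, 0 ≤ x → φ (2 * x) ≤ (C : ℝ≥0∞) * φ x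




lemma young_mono {φ : ℝ → ℝ≥0∞}
    (hconv : ∀ x y a b : ℝ, 0 ≤ a → 0 ≤ b → a + b = 1 →
      φ (a * x + b * y) ≤ ENNReal.ofReal a * φ x + ENNReal.ofReal b * φ y)
    (h0 : φ 0 = 0) : ∀ ⦃x y : ℝ⦄, 0 ≤ x → x ≤ y → φ x ≤ φ y := by
  intro x y hx hxy
  rcases (hx.trans hxy).eq_or_lt with hy | hy
  · have hx0 : x = 0 := le_antisymm (hxy.trans hy.ge) hx
    rw [hx0, ← hy]
  · have ha : (0:ℝ) ≤ x / y := div_nonneg hx hy.le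
    have hb : (0:ℝ) ≤ 1 - x / y := by
      have : x / y ≤ 1 := (div_le_one hy).mpr hxy
      linarith
    have key := hconv y 0 (x / y) (1 - x / y) ha hb (by ring)
    have hxy' : x / y * y + (1 - x / y) * 0 = x := by field_simp; ring
    rw [hxy', h0, mul_zero, add_zero] at key
    calc φ x ≤ ENNReal.ofReal (x / y) * φ y := key
      _ ≤ 1 * φ y := by
          gcongr
          exact ENNReal.ofReal_le_one.mpr ((div_le_one hy).mpr hxy)
      _ = φ y := one_mul _

lemma young_jensen {φ : ℝ → ℝ≥0∞} {α : Type*} [MeasurableSpace α]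
    (ν : Measure α) [IsProbabilityMeasure ν]
    (hconv : ∀ x y a b : ℝ, 0 ≤ a → 0 ≤ b → a + b = 1 →
      φ (a * x + b * y) ≤ ENNReal.ofReal a * φ x + ENNReal.ofReal b * φ y)
    (h0 : φ 0 = 0)
    (hlc : ∀ x, Tendsto φ (nhdsWithin x (Set.Iio x)) (nhds (φ x)))
    (u : α → ℝ) (hu : Measurable u) (hnn : ∀ a, 0 ≤ u a) (hui : Integrable u ν) :
    φ (∫ a, u a ∂ν) ≤ ∫⁻ a, φ (u a) ∂ν := by
  have hmono := young_mono hconv h0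
  set c := ∫ a, u a ∂ν with hc
  have hc0 : 0 ≤ c := integral_nonneg hnn
  rcases hc0.eq_or_lt with hc' | hcpos
  · rw [← hc', h0]; exact zero_le
  by_cases htop : φ c = ⊤
  · set A := {a | c ≤ u a} with hA
    have hAmeas : MeasurableSet A := measurableSet_le measurable_const hu
    by_cases hA0 : ν A = 0
    · exfalso
      have h1 : ∀ᵐ a ∂ν, u a < c := by
        rw [ae_iff]
        convert hA0 using 2
        ext a; simp [hA, not_lt]
      have h2 : ∫ a, (c - u a) ∂ν = 0 := by
        rw [integral_sub (integrable_const c) hui, integral_const]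
        simp [← hc]
      have h3 : ∀ᵐ a ∂ν, c - u a = 0 := by
        have := (integral_eq_zero_iff_of_nonneg_ae (f := fun a => c - u a)
          (by filter_upwards [h1] with a ha
              simp only [Pi.zero_apply]
              linarith)
          (by exact (integrable_const c).sub hui)).mp h2
        filter_upwards [this] with a ha
        simpa using ha
      have : NeBot (ae ν) := ae_neBot.mpr (IsProbabilityMeasure.ne_zero ν)
      obtain ⟨a, ha1, ha3⟩ := (h1.and h3).exists
      linarith
    · have hind : ∫⁻ a, A.indicator (fun _ => φ c) a ∂ν ≤ ∫⁻ a, φ (u a) ∂ν := by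
        apply lintegral_mono
        intro a
        by_cases haA : a ∈ A
        · rw [Set.indicator_of_mem haA]
          exact hmono hc0 haA
        · simp [Set.indicator_of_notMem haA]
      rw [lintegral_indicator_const hAmeas, htop, ENNReal.top_mul hA0] at hind
      exact le_trans le_top hind
  · -- finite case
    have key : ∀ c' ∈ Set.Ioo (0:ℝ) c, φ c' ≤ ∫⁻ a, φ (u a) ∂ν := by
      rintro c' ⟨hc'0, hc'c⟩
      set r := c' / c with hr
      have hr0 : 0 < r := div_pos hc'0 hcpos
      have hr1 : r ≤ 1 := le_of_lt ((div_lt_one hcpos).mpr hc'c)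
      set v := fun a => r * u a with hv
      have hvint : Integrable v ν := hui.const_mul r
      have hvI : ∫ a, v a ∂ν = c' := by
        simp only [hv]
        rw [integral_const_mul, ← hc, hr]
        field_simp
      have hvnn : ∀ a, 0 ≤ v a := fun a => mul_nonneg hr0.le (hnn a)
      have hvle : ∀ a, v a ≤ u a := fun a => mul_le_of_le_one_left (hnn a) hr1
      set D := {t : ℝ | 0 ≤ t ∧ φ t ≠ ⊤} with hD
      have hDc : c ∈ D := ⟨hc0, htop⟩
      have hmem : ∀ t, 0 ≤ t → t ≤ c → t ∈ D := fun t h1 h2 =>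
        ⟨h1, fun habs => htop (top_le_iff.mp (habs ▸ hmono h1 h2))⟩
      set φr := fun t => (φ t).toReal with hφr
      have hcvx : ConvexOn ℝ D φr := by
        constructor
        · intro x hx y hy a b ha hb hab
          refine ⟨add_nonneg (mul_nonneg ha hx.1) (mul_nonneg hb hy.1), fun habs => ?_⟩
          have h := hconv x y a b ha hb hab
          rw [smul_eq_mul, smul_eq_mul] at habs
          rw [habs] at h
          have hne : ENNReal.ofReal a * φ x + ENNReal.ofReal b * φ y ≠ ⊤ :=
            ENNReal.add_ne_top.mpr ⟨ENNReal.mul_ne_top ENNReal.ofReal_ne_top hx.2,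
              ENNReal.mul_ne_top ENNReal.ofReal_ne_top hy.2⟩
          exact hne (top_le_iff.mp h)
        · intro x hx y hy a b ha hb hab
          have h := hconv x y a b ha hb hab
          have h1 : ENNReal.ofReal a * φ x ≠ ⊤ :=
            ENNReal.mul_ne_top ENNReal.ofReal_ne_top hx.2
          have h2 : ENNReal.ofReal b * φ y ≠ ⊤ :=
            ENNReal.mul_ne_top ENNReal.ofReal_ne_top hy.2
          have := ENNReal.toReal_mono (ENNReal.add_ne_top.mpr ⟨h1, h2⟩) h
          rw [ENNReal.toReal_add h1 h2, ENNReal.toReal_mul, ENNReal.toReal_mul,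
            ENNReal.toReal_ofReal ha, ENNReal.toReal_ofReal hb] at this
          simpa [smul_eq_mul, hφr] using this
      have hc'D : c' ∈ D := hmem c' hc'0.le hc'c.le
      set S := (fun t => (φr c' - φr t) / (c' - t)) '' Set.Ico 0 c' with hS
      have hSne : S.Nonempty := ⟨_, ⟨0, ⟨le_refl 0, hc'0⟩, rfl⟩⟩
      have hSbdd : BddAbove S := by
        refine ⟨(φr c - φr c') / (c - c'), ?_⟩
        rintro _ ⟨t, ⟨ht0, htc'⟩, rfl⟩
        exact hcvx.slope_mono_adjacent (hmem t ht0 (htc'.le.trans hc'c.le)) hDc htc' hc'c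
      set s := sSup S with hsdef
      have hleft : ∀ t, 0 ≤ t → t < c' → (φr c' - φr t) / (c' - t) ≤ s :=
        fun t h1 h2 => le_csSup hSbdd ⟨t, ⟨h1, h2⟩, rfl⟩
      have hright : ∀ t, t ∈ D → c' < t → s ≤ (φr t - φr c') / (t - c') := by
        intro t ht htc
        refine csSup_le hSne ?_
        rintro _ ⟨t₀, ⟨ht₀0, ht₀c'⟩, rfl⟩
        exact hcvx.slope_mono_adjacent (hmem t₀ ht₀0 (ht₀c'.le.trans hc'c.le)) ht ht₀c' htc
      have hsupp : ∀ t : ℝ, 0 ≤ t → ENNReal.ofReal (φr c' + s * (t - c')) ≤ φ t := by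
        intro t ht
        by_cases htt : φ t = ⊤
        · rw [htt]; exact le_top
        have hreal : φr c' + s * (t - c') ≤ φr t := by
          rcases lt_trichotomy t c' with h | h | h
          · have h1 := hleft t ht h
            have hpos : 0 < c' - t := by linarith
            rw [div_le_iff₀ hpos] at h1
            nlinarith
          · rw [h]; simp
          · have h1 := hright t ⟨ht, htt⟩ h
            have hpos : 0 < t - c' := by linarith
            rw [le_div_iff₀ hpos] at h1
            linarith
        calc ENNReal.ofReal (φr c' + s * (t - c'))
            ≤ ENNReal.ofReal (φr t) := ENNReal.ofReal_le_ofReal hreal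
          _ ≤ φ t := ENNReal.ofReal_toReal_le
      set L := fun a => φr c' + s * (v a - c') with hLdef
      have h5 : Integrable (fun a => s * (v a - c')) ν := by
        exact (hvint.sub (integrable_const c')).const_mul s
      have hLint : Integrable L ν := by
        simp only [hLdef]
        exact (integrable_const _).add h5
      have hLI : ∫ a, L a ∂ν = φr c' := by
        simp only [hLdef]
        rw [integral_add (integrable_const _) h5,
          integral_const_mul, integral_sub hvint (integrable_const c'), hvI, integral_const]
        simp
      have step1 : ENNReal.ofReal (φr c') ≤ ∫⁻ a, ENNReal.ofReal (L a) ∂ν := by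
        have hmax : Integrable (fun a => max (L a) 0) ν := hLint.pos_part
        calc ENNReal.ofReal (φr c') = ENNReal.ofReal (∫ a, L a ∂ν) := by rw [hLI]
          _ ≤ ENNReal.ofReal (∫ a, max (L a) 0 ∂ν) :=
              ENNReal.ofReal_le_ofReal
                (integral_mono hLint hmax fun a => le_max_left _ _)
          _ = ∫⁻ a, ENNReal.ofReal (max (L a) 0) ∂ν :=
              ofReal_integral_eq_lintegral_ofReal hmax
                (ae_of_all _ fun a => le_max_right _ _)
          _ = ∫⁻ a, ENNReal.ofReal (L a) ∂ν := by
              refine lintegral_congr fun a => ?_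
              rcases le_total 0 (L a) with h | h
              · rw [max_eq_left h]
              · rw [max_eq_right h, ENNReal.ofReal_zero,
                  eq_comm, ENNReal.ofReal_eq_zero]
                exact h
      calc φ c' = ENNReal.ofReal (φr c') := (ENNReal.ofReal_toReal hc'D.2).symm
        _ ≤ ∫⁻ a, ENNReal.ofReal (L a) ∂ν := step1
        _ ≤ ∫⁻ a, φ (v a) ∂ν := lintegral_mono fun a => hsupp (v a) (hvnn a)
        _ ≤ ∫⁻ a, φ (u a) ∂ν := lintegral_mono fun a => hmono (hvnn a) (hvle a)
    refine le_of_tendsto (hlc c) ?_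
    filter_upwards [Ioo_mem_nhdsLT hcpos] with c' hc' using key c' hc'



/-- Luxemburg-norm contraction: `‖T_H f‖⁰_{L^φ(G/H,m)} ≤ ‖f‖⁰_{L^φ(G)}` for `f ∈ C_c(G)`. -/
theorem TH_luxNorm_contraction
    {G : Type*} [Group G] [TopologicalSpace G] [IsTopologicalGroup G] [LocallyCompactSpace G]
    [MeasurableSpace G] [BorelSpace G]
    (μ : Measure G) [μ.IsHaarMeasure]
    (H : Subgroup G) (hHc : IsCompact (H : Set G))
    (ν : Measure H) [ν.IsHaarMeasure] [IsProbabilityMeasure ν]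
    (m : Measure (G ⧸ H))
    (weil : ∀ f : G → ℝ≥0∞, Measurable f →
      ∀ F : G ⧸ H → ℝ≥0∞,
        (∀ x : G, F (QuotientGroup.mk x) = ∫⁻ h : H, f (x * (h : G)) ∂ν) →
        ∫⁻ p, F p ∂m = ∫⁻ x, f x ∂μ)
    (φ : ℝ → ℝ≥0∞) (hφ : IsYoung φ)
    (f : G → ℝ) (hf : Continuous f) (hfc : HasCompactSupport f)
    (F : G ⧸ H → ℝ)
    (hF : ∀ x : G, F (QuotientGroup.mk x) = ∫ h : H, f (x * (h : G)) ∂ν) :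
    luxNorm φ m F ≤ luxNorm φ μ f := by
  obtain ⟨hφ0, hconv, heven, hlc, hz, hinf⟩ := hφ
  have hmono := young_mono hconv hz
  haveI : CompactSpace (H : Set G) := isCompact_iff_compactSpace.mp hHc
  haveI : BorelSpace ↥H := by exact Subtype.borelSpace (H : Set G)
  -- measurability of φ composed with nonnegative functions
  have hψmeas : Measurable (fun t : ℝ => φ (max t 0)) := by
    apply Monotone.measurable
    intro t t' htt'
    exact hmono (le_max_right _ _) (max_le_max htt' le_rfl)
  -- the subset inclusion
  have hsub : {k : ℝ | 0 < k ∧ ∫⁻ x, φ (‖f x‖ / k) ∂μ ≤ 1} ⊆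
      {k : ℝ | 0 < k ∧ ∫⁻ p, φ (‖F p‖ / k) ∂m ≤ 1} := by
    rintro k ⟨hk, hint⟩
    refine ⟨hk, ?_⟩
    set g := fun x : G => φ (‖f x‖ / k) with hg
    have hgmeas : Measurable g := by
      have hge : g = (fun t : ℝ => φ (max t 0)) ∘ (fun x => ‖f x‖ / k) := by
        funext x
        simp only [hg, Function.comp_apply]
        rw [max_eq_left (div_nonneg (norm_nonneg _) hk.le)]
      rw [hge]
      exact hψmeas.comp ((hf.norm.div_const k).measurable)
    set Fφ := fun p : G ⧸ H => ∫⁻ h : H, g (p.out * (h : G)) ∂ν with hFφdef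
    have hFφ : ∀ x : G, Fφ (QuotientGroup.mk x) = ∫⁻ h : H, g (x * (h : G)) ∂ν := by
      intro x
      have hyx : QuotientGroup.mk (QuotientGroup.mk (s := H) x).out
          = QuotientGroup.mk (s := H) x := QuotientGroup.out_eq' _
      have hmem : x⁻¹ * (QuotientGroup.mk (s := H) x).out ∈ H :=
        (QuotientGroup.eq).mp hyx.symm
      have key : ∀ h : H, (QuotientGroup.mk (s := H) x).out * (h : G)
          = x * (((⟨x⁻¹ * (QuotientGroup.mk (s := H) x).out, hmem⟩ : H) * h : H) : G) := by
        intro h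
        simp only [Subgroup.coe_mul]
        group
      calc Fφ (QuotientGroup.mk x)
          = ∫⁻ h : H, g ((QuotientGroup.mk (s := H) x).out * (h : G)) ∂ν := rfl
        _ = ∫⁻ h : H, (fun h' : H => g (x * (h' : G)))
              ((⟨x⁻¹ * (QuotientGroup.mk (s := H) x).out, hmem⟩ : H) * h) ∂ν :=
            lintegral_congr fun h => by rw [key h]
        _ = ∫⁻ h : H, g (x * (h : G)) ∂ν :=
            lintegral_mul_left_eq_self (fun h' : H => g (x * (h' : G))) _
    have hweil := weil g hgmeas Fφ hFφ
    have hpoint : ∀ p : G ⧸ H, φ (‖F p‖ / k) ≤ Fφ p := by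
      intro p
      set x := p.out with hx
      have hxp : QuotientGroup.mk x = p := QuotientGroup.out_eq' p
      have hFp : F p = ∫ h : H, f (x * (h : G)) ∂ν := by rw [← hxp, hF]
      set u := fun h : H => ‖f (x * (h : G))‖ / k with hu
      have hu_cont : Continuous u :=
        ((hf.comp ((continuous_mul_left x).comp continuous_subtype_val)).norm).div_const k
      have hu_int : Integrable u ν :=
        hu_cont.integrable_of_hasCompactSupport (isClosed_tsupport u).isCompact
      have hFle : ‖F p‖ / k ≤ ∫ h : H, u h ∂ν := by
        have h2 : ∫ h : H, u h ∂ν = (∫ h : H, ‖f (x * (h : G))‖ ∂ν) / k := by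
          simp only [hu, div_eq_mul_inv]
          rw [integral_mul_const]
        rw [h2, hFp]
        gcongr
        exact norm_integral_le_integral_norm _
      calc φ (‖F p‖ / k) ≤ φ (∫ h : H, u h ∂ν) :=
            hmono (div_nonneg (norm_nonneg _) hk.le) hFle
        _ ≤ ∫⁻ h : H, φ (u h) ∂ν :=
            young_jensen ν hconv hz hlc u hu_cont.measurable
              (fun h => div_nonneg (norm_nonneg _) hk.le) hu_int
        _ = Fφ p := rfl
    calc ∫⁻ p, φ (‖F p‖ / k) ∂m ≤ ∫⁻ p, Fφ p ∂m := lintegral_mono hpoint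
      _ = ∫⁻ x, g x ∂μ := hweil
      _ ≤ 1 := hint
  -- nonemptiness of the set for f
  have hSfne : {k : ℝ | 0 < k ∧ ∫⁻ x, φ (‖f x‖ / k) ∂μ ≤ 1}.Nonempty := by
    have ht₀ : ∃ t₀ : ℝ, 0 < t₀ ∧ φ t₀ ≠ ⊤ := by
      by_contra hcon
      push_neg at hcon
      have h1 : Tendsto φ (nhdsWithin 0 (Set.Iio 0)) (nhds 0) := hz ▸ hlc 0
      have h2 : ∀ᶠ t in nhdsWithin (0:ℝ) (Set.Iio 0), φ t < 1 :=
        h1.eventually_lt_const (by norm_num)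
      obtain ⟨t, h_lt, h_mem⟩ := (h2.and self_mem_nhdsWithin).exists
      have hmemt : t < 0 := h_mem
      have htt : φ t = ⊤ := by
        rw [← heven t]
        exact hcon (-t) (by linarith)
      rw [htt] at h_lt
      simp at h_lt
    obtain ⟨t₀, ht₀pos, ht₀fin⟩ := ht₀
    obtain ⟨x₀, hx₀⟩ := hf.norm.exists_forall_ge_of_hasCompactSupport hfc.norm
    set M := ‖f x₀‖ with hM
    have hM0 : 0 ≤ M := norm_nonneg _
    set K := tsupport f with hK
    have hKc : IsCompact K := hfc
    have hKμ : μ K ≠ ⊤ := hKc.measure_lt_top.ne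
    set B := φ t₀ * μ K with hB
    have hBne : B ≠ ⊤ := ENNReal.mul_ne_top ht₀fin hKμ
    have hB1ne : B + 1 ≠ ⊤ := by simp [hBne]
    have hB1z : B + 1 ≠ 0 := by simp
    set δ := ((B + 1)⁻¹).toReal with hδ
    have hδofReal : ENNReal.ofReal δ = (B + 1)⁻¹ :=
      ENNReal.ofReal_toReal (ENNReal.inv_ne_top.mpr hB1z)
    have hδpos : 0 < δ :=
      ENNReal.toReal_pos (ENNReal.inv_ne_zero.mpr hB1ne) (ENNReal.inv_ne_top.mpr hB1z)
    have hδ1 : δ ≤ 1 := by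
      rw [hδ]
      calc ((B + 1)⁻¹).toReal ≤ (1 : ℝ≥0∞).toReal :=
        ENNReal.toReal_mono one_ne_top (ENNReal.inv_le_one.mpr le_add_self)
        _ = 1 := by simp
    set k := (M + 1) / (δ * t₀) with hk
    have hkpos : 0 < k := div_pos (by linarith) (mul_pos hδpos ht₀pos)
    refine ⟨k, hkpos, ?_⟩
    have hφδ : φ (δ * t₀) ≤ ENNReal.ofReal δ * φ t₀ := by
      have := hconv t₀ 0 δ (1 - δ) hδpos.le (by linarith) (by ring)
      rw [hz, mul_zero, add_zero, mul_zero, add_zero] at this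
      exact this
    have hpt : ∀ x : G, φ (‖f x‖ / k) ≤ K.indicator (fun _ => (B + 1)⁻¹ * φ t₀) x := by
      intro x
      by_cases hxK : x ∈ K
      · rw [Set.indicator_of_mem hxK]
        have hfx : ‖f x‖ / k ≤ δ * t₀ := by
          rw [hk, div_div_eq_mul_div, div_le_iff₀ (by linarith)]
          have h1 : ‖f x‖ ≤ M := hx₀ x
          nlinarith [mul_pos hδpos ht₀pos]
        calc φ (‖f x‖ / k) ≤ φ (δ * t₀) :=
              hmono (div_nonneg (norm_nonneg _) hkpos.le) hfx
          _ ≤ ENNReal.ofReal δ * φ t₀ := hφδ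
          _ = (B + 1)⁻¹ * φ t₀ := by rw [hδofReal]
      · rw [Set.indicator_of_notMem hxK, image_eq_zero_of_notMem_tsupport hxK]
        simp [hz]
    calc ∫⁻ x, φ (‖f x‖ / k) ∂μ
        ≤ ∫⁻ x, K.indicator (fun _ => (B + 1)⁻¹ * φ t₀) x ∂μ := lintegral_mono hpt
      _ = (B + 1)⁻¹ * φ t₀ * μ K :=
          lintegral_indicator_const (isClosed_tsupport f).measurableSet _
      _ = (B + 1)⁻¹ * B := by rw [hB, mul_assoc]
      _ ≤ (B + 1)⁻¹ * (B + 1) := by gcongr; exact le_self_add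
      _ = 1 := ENNReal.inv_mul_cancel hB1z hB1ne
  exact csInf_le_csInf ⟨0, fun x hx => hx.1.le⟩ hSfne hsub
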